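/- arXiv:1212.0200 — 7 statements merged into one kernel-verified Lean document; each statement's English description precedes it below -/
import Mathlib

section
/- Let ABCD be a rectangle with center O, let E ∈ AB and F ∈ CD with E, F, O collinear, and let G ∈ BC, H ∈ DA satisfy ∠EGB = ∠FGC and ∠EHA = ∠FHD. Then G, H, O are collinear. -/
/-!
Write `u = B - A`, `v = D - A`, so `u ⟂ v`. Since `O` lies on `EF` and `E`, `F` lie on opposite
sides, `F` is the reflection of `E` in `O`: `E = A + t u` and `F = C - t u`. At a point of a side,
the reflection condition says that the angles made with the side have equal tangents, i.e. the
side is cut in the ratio of the distances of `E` and `F` from it. This gives `H = A + t v` and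
`G = C - t v`, so `O` is also the midpoint of `GH`.
-/

open Real EuclideanGeometry
open scoped RealInnerProductSpace

lemma eq_of_midpoint_mem_segment {M : Type*} [AddCommGroup M] [Module ℝ M] {u v : M}
    (huv : LinearIndependent ℝ ![u, v]) (P : M) {s t : ℝ}
    (h : midpoint ℝ P (P + u + v) ∈ segment ℝ (P + t • u) (P + u + v + s • -u)) :
    s = t := by
  rw [segment_eq_image'] at h
  obtain ⟨r, -, hr⟩ := h
  rw [midpoint_eq_smul_add, invOf_eq_inv] at hr
  obtain ⟨hcu, hcv⟩ :=
    LinearIndependent.pair_iff.1 huv (t + r * (1 - s - t) - 2⁻¹) (r - 2⁻¹)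
      (by linear_combination (norm := module) hr)
  obtain rfl : r = 2⁻¹ := by linarith
  linarith

section

variable {V : Type*} [NormedAddCommGroup V] [InnerProductSpace ℝ V]

lemma cos_angle_add_smul_smul_mul_norm {x v : V} (hxv : ⟪x, v⟫ = 0) {a : ℝ} (ha : 0 ≤ a) :
    cos (InnerProductGeometry.angle (x + a • v) (a • v)) * ‖x + a • v‖ = a * ‖v‖ := by
  have hav : ‖a • v‖ = a * ‖v‖ := by rw [norm_smul, Real.norm_of_nonneg ha]
  rcases (norm_nonneg (a • v)).eq_or_lt with h0 | hpos
  · rw [eq_comm, norm_eq_zero] at h0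
    rw [← hav, h0, norm_zero, InnerProductGeometry.angle_zero_right, cos_pi_div_two, zero_mul]
  · refine mul_right_cancel₀ hpos.ne' ?_
    rw [mul_assoc, InnerProductGeometry.cos_angle_mul_norm_mul_norm, inner_add_left,
      real_inner_smul_right, real_inner_smul_right, real_inner_smul_left, hxv,
      real_inner_self_eq_norm_sq, hav]
    ring

lemma mul_norm_eq_mul_norm_of_angle_eq {x y v : V} (hxv : ⟪x, v⟫ = 0) (hyv : ⟪y, v⟫ = 0)
    (hv : v ≠ 0) {a b : ℝ} (ha : 0 ≤ a) (hb : 0 ≤ b)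
    (h : InnerProductGeometry.angle (x + a • -v) (a • -v) =
      InnerProductGeometry.angle (y + b • v) (b • v)) :
    a * ‖y‖ = b * ‖x‖ := by
  have hq : 0 < ‖v‖ := norm_pos_iff.2 hv
  have hxv' : ⟪x, a • -v⟫ = 0 := by rw [real_inner_smul_right, inner_neg_right, hxv]; simp
  have hyv' : ⟪y, b • v⟫ = 0 := by rw [real_inner_smul_right, hyv, mul_zero]
  have hX := cos_angle_add_smul_smul_mul_norm (x := x) (v := -v)
    (by rwa [inner_neg_right, neg_eq_zero]) ha
  have hY := cos_angle_add_smul_smul_mul_norm hyv hb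
  have hXn := norm_add_sq_eq_norm_sq_add_norm_sq_real hxv'
  have hYn := norm_add_sq_eq_norm_sq_add_norm_sq_real hyv'
  rw [h, norm_neg] at hX
  rw [norm_smul, norm_neg, Real.norm_of_nonneg ha] at hXn
  rw [norm_smul, Real.norm_of_nonneg hb] at hYn
  set c := cos (InnerProductGeometry.angle (y + b • v) (b • v))
  -- squaring `hX` and using Pythagoras gives `c² ‖x‖² = a² ‖v‖² (1 - c²)`, and likewise for `y`
  have hsq : c ^ 2 * (a * ‖y‖) ^ 2 = c ^ 2 * (b * ‖x‖) ^ 2 := by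
    linear_combination (a ^ 2) * ((c * ‖y + b • v‖ + b * ‖v‖) * hY - c ^ 2 * hYn)
      - b ^ 2 * ((c * ‖x + a • -v‖ + a * ‖v‖) * hX - c ^ 2 * hXn)
  rcases eq_or_ne c 0 with hc | hc
  · rw [hc, zero_mul] at hX hY
    obtain rfl : a = 0 := by nlinarith
    obtain rfl : b = 0 := by nlinarith
    simp
  · exact (sq_eq_sq₀ (by positivity) (by positivity)).1
      (mul_left_cancel₀ (pow_ne_zero 2 hc) hsq)

lemma eq_of_angle_eq_angle_of_inner_eq_zero {u v : V} (hu : u ≠ 0) (hv : v ≠ 0)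
    (huv : ⟪u, v⟫ = 0) {P Q X Y M : V} {t d : ℝ} (ht : t ∈ Set.Icc (0 : ℝ) 1)
    (hd : d ∈ Set.Icc (0 : ℝ) 1) (hQ : Q = P + v) (hX : X = P + t • u)
    (hY : Y = Q + (1 - t) • u) (hM : M = P + d • v) (h : ∠ X M P = ∠ Y M Q) :
    d = t := by
  subst hQ hX hY hM
  simp only [EuclideanGeometry.angle, vsub_eq_sub] at h
  have key := mul_norm_eq_mul_norm_of_angle_eq (x := t • u) (y := (1 - t) • u) (v := v)
    (by rw [real_inner_smul_left, huv, mul_zero]) (by rw [real_inner_smul_left, huv, mul_zero])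
    hv hd.1 (sub_nonneg.2 hd.2) (by convert h using 2 <;> module)
  rw [norm_smul, norm_smul, Real.norm_of_nonneg ht.1,
    Real.norm_of_nonneg (sub_nonneg.2 ht.2)] at key
  have : (d - t) * ‖u‖ = 0 := by linear_combination key
  simpa [sub_eq_zero, hu] using this

end

/-- In a rectangle `ABCD` with center `O`, if `E ∈ AB`, `F ∈ CD` with `O` on segment `EF`,
`G ∈ BC` with `∠EGB = ∠FGC`, and `H ∈ DA` with `∠EHA = ∠FHD`, then `G`, `H`, `O`
are collinear. -/
theorem rectangle_billiard_collinear (A B C D O E F G H : EuclideanSpace ℝ (Fin 2))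
    (hpara : B - A = C - D)
    (hperp : inner ℝ (B - A) (C - B) = (0 : ℝ))
    (hAB : A ≠ B) (hBC : B ≠ C)
    (hO : O = midpoint ℝ A C)
    (hE : E ∈ segment ℝ A B) (hF : F ∈ segment ℝ C D)
    (hEFO : O ∈ segment ℝ E F)
    (hG : G ∈ segment ℝ B C) (hH : H ∈ segment ℝ D A)
    (hGangle : ∠ E G B = ∠ F G C) (hHangle : ∠ E H A = ∠ F H D) :
    Collinear ℝ {G, H, O} := by
  obtain ⟨u, rfl⟩ : ∃ u, B = A + u := ⟨B - A, by abel⟩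
  obtain ⟨v, rfl⟩ : ∃ v, C = A + u + v := ⟨C - (A + u), by abel⟩
  obtain rfl : D = A + v := by linear_combination (norm := module) hpara
  have hu : u ≠ 0 := by simpa using hAB.symm
  have hv : v ≠ 0 := by simpa using hBC.symm
  have huv : ⟪u, v⟫ = 0 := by simpa using hperp
  have hlin : LinearIndependent ℝ ![u, v] :=
    linearIndependent_of_ne_zero_of_inner_eq_zero (by simp [Fin.forall_fin_two, hu, hv])
      (by simp [Pairwise, Fin.forall_fin_two, huv, real_inner_comm u v])
  obtain ⟨t, ht, rfl⟩ : ∃ t ∈ Set.Icc (0 : ℝ) 1, A + t • u = E := by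
    simpa [segment_eq_image'] using hE
  obtain ⟨s, -, rfl⟩ : ∃ s ∈ Set.Icc (0 : ℝ) 1, A + u + v + s • -u = F := by
    simpa [segment_eq_image'] using hF
  obtain ⟨g, hg, rfl⟩ : ∃ g ∈ Set.Icc (0 : ℝ) 1, A + u + v + g • -v = G := by
    simpa [segment_symm ℝ (A + u), segment_eq_image'] using hG
  obtain ⟨d, hd, rfl⟩ : ∃ d ∈ Set.Icc (0 : ℝ) 1, A + d • v = H := by
    simpa [segment_symm ℝ (A + v), segment_eq_image'] using hH
  subst hO
  have hs : s = t := eq_of_midpoint_mem_segment hlin A hEFO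
  subst s
  have hdt : d = t := eq_of_angle_eq_angle_of_inner_eq_zero hu hv huv ht hd rfl rfl
    (by module) rfl hHangle
  have hgt : g = t := eq_of_angle_eq_angle_of_inner_eq_zero (neg_ne_zero.2 hu)
    (neg_ne_zero.2 hv) (by simpa using huv) ht hg (by abel) (by module) (by module) rfl
    hGangle.symm
  subst d g
  have hmid : midpoint ℝ (A + u + v + t • -v) (A + t • v) = midpoint ℝ A (A + u + v) := by
    simp only [midpoint_eq_smul_add]
    module
  rw [Set.pair_comm, ← hmid]
  exact (wbtw_midpoint ℝ _ _).collinear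
end

section
/- Let ABCD be a rectangle with center O, E ∈ AB and F ∈ CD with E, F, O collinear, G ∈ BC with ∠EGB = ∠FGC, and H ∈ DA with ∠EHA = ∠FHD. Then EGFH is a parallelogram whose sides are parallel to the diagonals of ABCD. -/
/-!
The line `EF` through the centre is halved by it, so `F` is the point reflection of `E`. At `G`
the reflection law makes the right triangles `EBG` and `FCG` similar, so
`EB · CG = FC · BG = AE · BG`, which forces `BG : BC = EB : AB`, i.e. `EG ∥ AC`. The same
argument at `H`, in the rectangle `CDAB`, gives `AH : AD = AE : AB`, and the two parallelisms
together make `EGFH` a parallelogram.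
-/

open Real EuclideanGeometry RealInnerProductSpace

section RightTriangles

variable {V P : Type*} [NormedAddCommGroup V] [InnerProductSpace ℝ V] [MetricSpace P]
  [NormedAddTorsor V P]

/-- A degenerate triangle (`x = p₂`) has the junk angle `π / 2` at `x`, which a genuine right
triangle never has. -/
theorem dist_mul_dist_eq_of_angle_eq_of_angle_eq_pi_div_two {p₁ p₂ q₁ q₂ x : P}
    (hp : ∠ p₁ p₂ x = π / 2) (hq : ∠ q₁ q₂ x = π / 2) (h : ∠ p₂ x p₁ = ∠ q₂ x q₁) :
    dist p₁ p₂ * dist x q₂ = dist q₁ q₂ * dist x p₂ := by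
  by_cases hxp : x = p₂ <;> by_cases hxq : x = q₂
  · subst hxp hxq; simp
  · subst hxp
    rw [angle_self_left, angle_eq_arctan_of_angle_eq_pi_div_two hq hxq] at h
    exact absurd h (arctan_lt_pi_div_two _).ne'
  · subst hxq
    rw [angle_self_left, angle_eq_arctan_of_angle_eq_pi_div_two hp hxp] at h
    exact absurd h (arctan_lt_pi_div_two _).ne
  · rw [angle_eq_arctan_of_angle_eq_pi_div_two hp hxp,
      angle_eq_arctan_of_angle_eq_pi_div_two hq hxq, arctan_inj,
      div_eq_div_iff (dist_pos.2 hxp).ne' (dist_pos.2 hxq).ne'] at h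
    linarith

/-- The law of reflection: the reflection point divides the segment between the feet `q₁`, `q₂`
of the perpendiculars in the ratio of the distances of `p₁`, `p₂` from the line. -/
theorem dist_mul_one_sub_eq_dist_mul_of_angle_eq {p₁ p₂ q₁ q₂ : P} {t : ℝ} (hq : q₁ ≠ q₂)
    (ht : t ∈ Set.Icc (0 : ℝ) 1) (h₁ : ⟪p₁ -ᵥ q₁, q₂ -ᵥ q₁⟫ = 0) (h₂ : ⟪p₂ -ᵥ q₂, q₂ -ᵥ q₁⟫ = 0)
    (h : ∠ p₁ (AffineMap.lineMap q₁ q₂ t) q₁ = ∠ p₂ (AffineMap.lineMap q₁ q₂ t) q₂) :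
    dist p₁ q₁ * (1 - t) = dist p₂ q₂ * t := by
  have hp : ∠ p₁ q₁ (AffineMap.lineMap q₁ q₂ t) = π / 2 := by
    rw [angle, ← InnerProductGeometry.inner_eq_zero_iff_angle_eq_pi_div_two,
      AffineMap.lineMap_vsub_left, inner_smul_right, h₁, mul_zero]
  have hq' : ∠ p₂ q₂ (AffineMap.lineMap q₁ q₂ t) = π / 2 := by
    rw [angle, ← InnerProductGeometry.inner_eq_zero_iff_angle_eq_pi_div_two,
      AffineMap.lineMap_vsub_right, ← neg_vsub_eq_vsub_rev q₂ q₁, smul_neg, inner_neg_right,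
      inner_smul_right, h₂, mul_zero, neg_zero]
  have key := dist_mul_dist_eq_of_angle_eq_of_angle_eq_pi_div_two hp hq'
    (by rw [angle_comm, h, angle_comm])
  rw [dist_lineMap_left, dist_lineMap_right, Real.norm_of_nonneg ht.1,
    Real.norm_of_nonneg (sub_nonneg.2 ht.2)] at key
  exact mul_right_cancel₀ (dist_ne_zero.2 hq) (by linear_combination key)

end RightTriangles

theorem eq_midpoint_of_mem_segment {V : Type*} [AddCommGroup V] [Module ℝ V] {x y z : V}
    (ℓ : V →ₗ[ℝ] ℝ) (hz : z ∈ segment ℝ x y) (hℓ : ℓ (z - x) = ℓ (y - z)) (hne : ℓ (z - x) ≠ 0) :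
    z = midpoint ℝ x y := by
  obtain ⟨s, -, rfl⟩ := (segment_eq_image' ℝ x y).le hz
  have hzx : x + s • (y - x) - x = s • (y - x) := by abel
  have hyz : y - (x + s • (y - x)) = (1 - s) • (y - x) := by module
  rw [hzx, hyz, map_smul, map_smul, smul_eq_mul, smul_eq_mul] at hℓ
  rw [hzx, map_smul, smul_eq_mul] at hne
  have hs : s = 1 / 2 := by
    apply mul_right_cancel₀ (right_ne_zero_of_mul hne)
    linarith
  rw [hs, midpoint_eq_smul_add, invOf_eq_inv]
  module

section Rectangle

open AffineMap

variable {V : Type*} [NormedAddCommGroup V] [InnerProductSpace ℝ V] {A B C D : V} {e f g : ℝ}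

/-- The centre sees the side `AB` at height `0` and the side `CD` at height `‖C - B‖ ^ 2` in the
direction `C - B`, so it is the midpoint of any segment through it joining these sides. -/
theorem eq_of_midpoint_mem_segment_lineMap (hpara : B - A = C - D) (hperp : ⟪B - A, C - B⟫ = 0)
    (hAB : A ≠ B) (hBC : B ≠ C)
    (h : midpoint ℝ A C ∈ segment ℝ (lineMap A B e) (lineMap C D f)) : e = f := by
  have hv : ∀ a b : ℝ, ⟪C - B, a • (B - A) + b • (C - B)⟫ = b * ‖C - B‖ ^ 2 := fun a b => by
    rw [inner_add_right, inner_smul_right, inner_smul_right, real_inner_comm, hperp,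
      real_inner_self_eq_norm_sq, mul_zero, zero_add]
  have hOE : midpoint ℝ A C - lineMap A B e = (1 / 2 - e) • (B - A) + (1 / 2 : ℝ) • (C - B) := by
    rw [midpoint_eq_smul_add, invOf_eq_inv, lineMap_apply_module]; module
  have hFO : lineMap C D f - midpoint ℝ A C = (1 / 2 - f) • (B - A) + (1 / 2 : ℝ) • (C - B) := by
    rw [midpoint_eq_smul_add, invOf_eq_inv, lineMap_apply_module,
      show D = C - (B - A) by rw [hpara, sub_sub_cancel]]
    module
  have hmid := eq_midpoint_of_mem_segment (innerₛₗ ℝ (C - B)) h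
    (by simp only [innerₛₗ_apply_apply, hOE, hFO, hv])
    (by
      simp only [innerₛₗ_apply_apply, hOE, hv]
      exact mul_ne_zero (by norm_num) (pow_ne_zero 2 (norm_ne_zero_iff.2 (sub_ne_zero.2 hBC.symm))))
  have hsymm : midpoint ℝ A C - lineMap A B e = lineMap C D f - midpoint ℝ A C := by
    rw [hmid, midpoint_eq_smul_add, invOf_eq_inv]; module
  rw [hOE, hFO, add_left_inj] at hsymm
  exact sub_right_injective (smul_left_injective ℝ (sub_ne_zero.2 hAB.symm) hsymm)

/-- That is, `BG : BC = EB : AB`. -/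
theorem eq_one_sub_of_angle_lineMap_eq (hpara : B - A = C - D) (hperp : ⟪B - A, C - B⟫ = 0)
    (hAB : A ≠ B) (hBC : B ≠ C) (he : e ∈ Set.Icc (0 : ℝ) 1) (hg : g ∈ Set.Icc (0 : ℝ) 1)
    (h : ∠ (lineMap A B e) (lineMap B C g) B = ∠ (lineMap C D e) (lineMap B C g) C) :
    g = 1 - e := by
  have hEB : ⟪lineMap A B e -ᵥ B, C -ᵥ B⟫ = 0 := by
    rw [lineMap_vsub_right, inner_smul_left, vsub_eq_sub, vsub_eq_sub, ← neg_sub B A,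
      inner_neg_left, hperp, neg_zero, mul_zero]
  have hFC : ⟪lineMap C D e -ᵥ C, C -ᵥ B⟫ = 0 := by
    rw [lineMap_vsub_left, inner_smul_left, vsub_eq_sub, vsub_eq_sub, ← neg_sub C D, ← hpara,
      inner_neg_left, hperp, neg_zero, mul_zero]
  have key := dist_mul_one_sub_eq_dist_mul_of_angle_eq hBC hg hEB hFC h
  have hCD : dist C D = dist A B := by rw [dist_eq_norm, ← hpara, dist_eq_norm']
  rw [dist_lineMap_right, dist_lineMap_left, hCD, Real.norm_of_nonneg he.1,
    Real.norm_of_nonneg (sub_nonneg.2 he.2)] at key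
  exact mul_left_cancel₀ (dist_ne_zero.2 hAB) (by linear_combination -key)

end Rectangle

/-- In a rectangle `ABCD` with center `O`, if `E ∈ AB`, `F ∈ CD` with `O` on segment `EF`,
`G ∈ BC` with `∠EGB = ∠FGC`, and `H ∈ DA` with `∠EHA = ∠FHD`, then `EGFH` is a
parallelogram whose sides are parallel to the diagonals of `ABCD`. -/
theorem rectangle_billiard_parallelogram (A B C D O E F G H : EuclideanSpace ℝ (Fin 2))
    (hpara : B - A = C - D)
    (hperp : inner ℝ (B - A) (C - B) = (0 : ℝ))
    (hAB : A ≠ B) (hBC : B ≠ C)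
    (hO : O = midpoint ℝ A C)
    (hE : E ∈ segment ℝ A B) (hF : F ∈ segment ℝ C D)
    (hEFO : O ∈ segment ℝ E F)
    (hG : G ∈ segment ℝ B C) (hH : H ∈ segment ℝ D A)
    (hGangle : ∠ E G B = ∠ F G C) (hHangle : ∠ E H A = ∠ F H D) :
    G - E = F - H ∧ (∃ r : ℝ, G - E = r • (C - A)) ∧ (∃ s : ℝ, F - G = s • (D - B)) := by
  rw [segment_eq_image_lineMap] at hE hF hG hH
  obtain ⟨e, he, rfl⟩ := hE
  obtain ⟨f, -, rfl⟩ := hF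
  obtain ⟨g, hg, rfl⟩ := hG
  obtain ⟨k, hk, rfl⟩ := hH
  subst hO
  obtain rfl : e = f := eq_of_midpoint_mem_segment_lineMap hpara hperp hAB hBC hEFO
  obtain rfl : g = 1 - e := eq_one_sub_of_angle_lineMap_eq hpara hperp hAB hBC he hg hGangle
  -- `CDAB` is again a rectangle, in which `F` and `E` swap roles and `H` plays the part of `G`.
  have hDA : D - A = C - B := by linear_combination (norm := module) hpara
  have hpara' : D - C = A - B := by linear_combination (norm := module) hpara
  have hperp' : inner ℝ (D - C) (A - D) = (0 : ℝ) := by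
    rw [← neg_sub C D, ← neg_sub D A, ← hpara, hDA, inner_neg_neg, hperp]
  obtain rfl : k = 1 - e := eq_one_sub_of_angle_lineMap_eq hpara' hperp'
    (by rwa [← sub_ne_zero, ← hpara, sub_ne_zero, ne_comm])
    (by rwa [← sub_ne_zero, hDA, sub_ne_zero, ne_comm]) he hk hHangle.symm
  refine ⟨?_, ⟨1 - e, ?_⟩, ⟨e, ?_⟩⟩ <;> simp only [AffineMap.lineMap_apply_module] <;> module
end

section
/- Let X_j = (cos(jθ+φ), sin(jθ+φ)) on the unit circle, P = (p,0) with p ≠ ±1, and let L_j be the line through X_j perpendicular to PX_j. Then each L_j is tangent to the ellipse/hyperbola x² + y²/(1-p²) = 1. -/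
/-!
Write `X = (c, s)` with `c² + s² = 1` and `m = 1 - p²`. Restricting the conic to the line
`X + t (-s, c - p)` gives a quadratic in `t` whose coefficients collapse, via `c² + s² = 1`, to
`(1 - cp)² / m`, `2 p s (cp - 1) / m` and `p² s² / m`. Their discriminant is
`4 p² s² (cp - 1)² / m² - 4 (1 - cp)² p² s² / m² = 0`.
-/

theorem conic_restrict_line (x₀ y₀ u v m t : ℝ) :
    (x₀ + t * u) ^ 2 + (y₀ + t * v) ^ 2 / m - 1
      = (u ^ 2 + v ^ 2 / m) * t ^ 2 + 2 * (x₀ * u + y₀ * v / m) * t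
        + (x₀ ^ 2 + y₀ ^ 2 / m - 1) := by
  ring

section PedalCoefficients

variable {c s p : ℝ}

theorem pedal_coeff_sq (hcs : c ^ 2 + s ^ 2 = 1) (hm : 1 - p ^ 2 ≠ 0) :
    (-s) ^ 2 + (c - p) ^ 2 / (1 - p ^ 2) = (1 - c * p) ^ 2 / (1 - p ^ 2) := by
  field_simp
  linear_combination (1 - p ^ 2) * hcs

theorem pedal_coeff_lin (hm : 1 - p ^ 2 ≠ 0) :
    c * -s + s * (c - p) / (1 - p ^ 2) = p * s * (c * p - 1) / (1 - p ^ 2) := by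
  field_simp
  ring

theorem pedal_coeff_const (hcs : c ^ 2 + s ^ 2 = 1) (hm : 1 - p ^ 2 ≠ 0) :
    c ^ 2 + s ^ 2 / (1 - p ^ 2) - 1 = p ^ 2 * s ^ 2 / (1 - p ^ 2) := by
  field_simp
  linear_combination (1 - p ^ 2) * hcs

end PedalCoefficients

/-- For `X_j = (cos (jθ+φ), sin (jθ+φ))` on the unit circle and `P = (p, 0)`, `p ≠ ±1`,
the line `L_j` through `X_j` perpendicular to `P X_j` is tangent to the conic
`x² + y²/(1-p²) = 1` (tangency expressed by a vanishing discriminant of the restricted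
quadratic). -/
theorem negative_pedal_line_tangent (p θ φ : ℝ) (hp : 0 < p) (hp1 : p ≠ 1) (j : ℤ) :
    ∃ a b k : ℝ,
      (∀ s : ℝ,
        (Real.cos ((j : ℝ) * θ + φ) + s * (-(Real.sin ((j : ℝ) * θ + φ)))) ^ 2
          + (Real.sin ((j : ℝ) * θ + φ) + s * (Real.cos ((j : ℝ) * θ + φ) - p)) ^ 2
              / (1 - p ^ 2) - 1
        = a * s ^ 2 + b * s + k) ∧
      b ^ 2 - 4 * a * k = 0 := by
  set c := Real.cos ((j : ℝ) * θ + φ)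
  set s := Real.sin ((j : ℝ) * θ + φ)
  have hcs : c ^ 2 + s ^ 2 = 1 := Real.cos_sq_add_sin_sq _
  have hm : 1 - p ^ 2 ≠ 0 :=
    sub_ne_zero.mpr fun h ↦ hp1 ((pow_eq_one_iff_of_nonneg hp.le two_ne_zero).mp h.symm)
  refine ⟨_, _, _, fun t ↦ conic_restrict_line c s (-s) (c - p) (1 - p ^ 2) t, ?_⟩
  rw [pedal_coeff_sq hcs hm, pedal_coeff_lin hm, pedal_coeff_const hcs hm]
  field_simp
  ring
end

section
/- Let C be the conic x² + y²/(1-p²) = 1 with foci P = (p,0) and P' = (-p,0) (0 < p < 1), and for X on the unit circle let L be the line through X perpendicular to PX. If Y is the second intersection of L with the unit circle, then L is also perpendicular to P'Y; hence the negative pedal envelopes of C from P and from P' coincide. -/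
open Real EuclideanGeometry

/-!
With the centre at the origin the second focus is `P' = -P`. For a chord `XY` of a circle,
`Y - X ⊥ Y + X`, so `Y - X ⊥ X - P` forces `Y - X ⊥ Y + P = Y - P'`. In the plane two vectors
orthogonal to the same nonzero vector are parallel, hence `Y - P' ∥ X - P` and every direction
along `L` is orthogonal to `P'Y`. In the tangent case `Y = X` lies on the axis of the foci,
and the axis normal `e₁` plays the role of `Y - X`.
-/

theorem inner_sub_add_eq_zero_of_norm_eq {F : Type*} [NormedAddCommGroup F]
    [InnerProductSpace ℝ F] {x y p : F} (hxy : ‖x‖ = ‖y‖) (h : inner ℝ (y - x) (x - p) = 0) :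
    inner ℝ (y - x) (y + p) = 0 := by
  have hchord : inner ℝ (y - x) (y + x) = 0 := by
    rw [real_inner_comm]
    exact (real_inner_add_sub_eq_zero_iff y x).2 hxy.symm
  calc inner ℝ (y - x) (y + p) = inner ℝ (y - x) (y + x) - inner ℝ (y - x) (x - p) := by
        rw [← inner_sub_right]; congr 1; abel
    _ = 0 := by rw [hchord, h, sub_zero]

/-- Let `P = (p,0)`, `P' = (-p,0)` (`0 < p < 1`) be the foci of `x² + y²/(1-p²) = 1`,
whose pedal circle is the unit circle. For `X` on the unit circle let `L` be the line
through `X` perpendicular to `PX`, and let `Y` be the second intersection of `L` with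
the unit circle (with `Y = X` in the tangent case). Then `L` is also perpendicular to
`P'Y`; hence the negative pedal envelopes from `P` and `P'` coincide. -/
theorem negative_pedal_other_focus (p : ℝ) (hp0 : 0 < p) (hp1 : p < 1)
    (P P' X Y : EuclideanSpace ℝ (Fin 2))
    (hP0 : P 0 = p) (hP1 : P 1 = 0) (hP'0 : P' 0 = -p) (hP'1 : P' 1 = 0)
    (hX : ‖X‖ = 1) (hY : ‖Y‖ = 1)
    (hYL : inner ℝ (Y - X) (X - P) = (0 : ℝ))
    (htangent : Y = X → X 1 = 0) :
    ∀ Z : EuclideanSpace ℝ (Fin 2),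
      inner ℝ (Z - X) (X - P) = (0 : ℝ) → inner ℝ (Z - X) (Y - P') = (0 : ℝ) := by
  intro Z hZ
  have : Fact (Module.finrank ℝ (EuclideanSpace ℝ (Fin 2)) = 2) := ⟨finrank_euclideanSpace_fin⟩
  have hP : P = p • EuclideanSpace.single 0 1 := by
    ext i; fin_cases i <;> simp [hP0, hP1]
  have hP' : P' = -P := by
    ext i; fin_cases i <;> simp [hP0, hP1, hP'0, hP'1]
  have hXP : X - P ≠ 0 := by
    rw [sub_ne_zero]
    rintro rfl
    rw [hP, norm_smul, PiLp.norm_single, norm_one, mul_one, Real.norm_of_nonneg hp0.le] at hX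
    exact hp1.ne hX
  obtain ⟨v, hv, hvX, hvY⟩ : ∃ v : EuclideanSpace ℝ (Fin 2),
      v ≠ 0 ∧ inner ℝ v (X - P) = 0 ∧ inner ℝ v (Y + P) = 0 := by
    by_cases hYX : Y = X
    · have hX1 : X 1 = 0 := htangent hYX
      refine ⟨EuclideanSpace.single 1 1, by simp, ?_, ?_⟩ <;>
        simp [EuclideanSpace.inner_single_left, hYX, hX1, hP1]
    · exact ⟨Y - X, sub_ne_zero.2 hYX, hYL,
        inner_sub_add_eq_zero_of_norm_eq (hX.trans hY.symm) hYL⟩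
  have hparallel : Y - P' ∈ ℝ ∙ (X - P) := by
    rw [hP', sub_neg_eq_add]
    exact Submodule.mem_span_singleton_of_inner_eq_zero_of_inner_eq_zero hv hXP hvY hvX
  exact Submodule.inner_left_of_mem_orthogonal hparallel
    (Submodule.mem_orthogonal_singleton_iff_inner_left.2 hZ)
end

section
/- Let C be a conic with foci F and F', o its pedal circle with respect to F with center O. For X on o, let L be the line through X orthogonal to FX, let Y be the second intersection of L with o, and Z an intersection of L with C. Then F'Z is parallel to OX and FZ is parallel to OY. -/
/-!
For `Z` on the ellipse, the focal distance is `‖Z - F'‖ = 1 + p Z₀`. If `Z` lies on the line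
through `X` perpendicular to `FX`, with `‖X‖ = 1`, the component of `Z - F'` along `X` is also
`1 + p Z₀`, so `Z - F'` is a multiple of `X` by the equality case of Cauchy–Schwarz. Since `O` is
the midpoint of `FF'`, the second point `Y` of `L` on the circle is the foot of the perpendicular
from `F'` to `L`, and the same argument with the foci exchanged gives `FZ ∥ OY`.
-/

local notation "ℝ²" => EuclideanSpace ℝ (Fin 2)

namespace EuclideanSpace

lemma ext_fin_two {u v : ℝ²} (h0 : u 0 = v 0) (h1 : u 1 = v 1) : u = v := by
  ext i
  fin_cases i
  exacts [h0, h1]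

lemma norm_sq_fin_two (v : ℝ²) : ‖v‖ ^ 2 = v 0 ^ 2 + v 1 ^ 2 := by
  simp [real_norm_sq_eq, Fin.sum_univ_two]

lemma inner_fin_two (u v : ℝ²) : inner ℝ u v = u 0 * v 0 + u 1 * v 1 := by
  simp [PiLp.inner_apply, Fin.sum_univ_two, mul_comm]

lemma exists_eq_smul_of_cross_eq_zero {u v : ℝ²} (hv : v ≠ 0)
    (h : u 0 * v 1 = u 1 * v 0) : ∃ r : ℝ, u = r • v := by
  have hv2 : v 0 ^ 2 + v 1 ^ 2 ≠ 0 := by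
    rw [← norm_sq_fin_two]; positivity
  refine ⟨(u 0 * v 0 + u 1 * v 1) / (v 0 ^ 2 + v 1 ^ 2), ext_fin_two ?_ ?_⟩ <;>
    simp only [PiLp.smul_apply, smul_eq_mul] <;> field_simp
  · linear_combination v 1 * h
  · linear_combination -v 0 * h

lemma exists_eq_smul_of_inner_eq_zero {u v w : ℝ²} (hv : v ≠ 0) (hw : w ≠ 0)
    (hu : inner ℝ u w = 0) (hvw : inner ℝ v w = 0) : ∃ t : ℝ, u = t • v := by
  rw [inner_fin_two] at hu hvw
  refine exists_eq_smul_of_cross_eq_zero hv ?_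
  have h0 : (u 0 * v 1 - u 1 * v 0) * w 0 = 0 := by linear_combination v 1 * hu - u 1 * hvw
  have h1 : (u 0 * v 1 - u 1 * v 0) * w 1 = 0 := by linear_combination u 0 * hvw - v 0 * hu
  by_contra hne
  exact hw (ext_fin_two (by simpa [sub_eq_zero, hne] using h0)
    (by simpa [sub_eq_zero, hne] using h1))

end EuclideanSpace

open EuclideanSpace

lemma real_inner_sub_add_eq_zero_of_norm_eq {E : Type*} [NormedAddCommGroup E]
    [InnerProductSpace ℝ E] {F X Y : E} (hXY : ‖X‖ = ‖Y‖)
    (h : inner ℝ (Y - X) (X - F) = 0) : inner ℝ (Y - X) (Y + F) = 0 := by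
  have hchord : inner ℝ (Y - X) (Y + X) = 0 := by
    rw [real_inner_comm]; exact (real_inner_add_sub_eq_zero_iff Y X).2 hXY.symm
  calc inner ℝ (Y - X) (Y + F) = inner ℝ (Y - X) (Y + X) - inner ℝ (Y - X) (X - F) := by
        rw [← inner_sub_right]; congr 1; abel
    _ = 0 := by rw [hchord, h, sub_zero]

section Ellipse

variable {p : ℝ} {F F' X Z : ℝ²}

lemma norm_sub_focus_of_mem_ellipse (hp : p ^ 2 < 1) (hF'0 : F' 0 = -p) (hF'1 : F' 1 = 0)
    (hZC : Z 0 ^ 2 + Z 1 ^ 2 / (1 - p ^ 2) = 1) : ‖Z - F'‖ = 1 + p * Z 0 := by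
  have hq : 0 < 1 - p ^ 2 := by linarith
  have hZC' : Z 0 ^ 2 * (1 - p ^ 2) + Z 1 ^ 2 = 1 - p ^ 2 := by
    field_simp at hZC; linarith
  have hZ0 : Z 0 ^ 2 ≤ 1 := by nlinarith [sq_nonneg (Z 1)]
  have hpos : 0 ≤ 1 + p * Z 0 := by nlinarith [sq_nonneg (p + Z 0), sq_nonneg (p - Z 0)]
  rw [← pow_left_inj₀ (norm_nonneg _) hpos two_ne_zero, norm_sq_fin_two]
  simp only [PiLp.sub_apply, hF'0, hF'1]
  linear_combination hZC'

lemma inner_sub_focus_of_mem_pedal (hF0 : F 0 = p) (hF1 : F 1 = 0) (hF'0 : F' 0 = -p)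
    (hF'1 : F' 1 = 0) (hX : ‖X‖ = 1) (hZL : inner ℝ (Z - X) (X - F) = 0) :
    inner ℝ (Z - F') X = 1 + p * Z 0 := by
  have hX' := norm_sq_fin_two X
  rw [hX, one_pow] at hX'
  rw [inner_fin_two] at hZL ⊢
  simp only [PiLp.sub_apply, hF0, hF1, hF'0, hF'1] at hZL ⊢
  linear_combination hZL - hX'

lemma exists_sub_focus_eq_smul (hp : p ^ 2 < 1) (hF0 : F 0 = p) (hF1 : F 1 = 0)
    (hF'0 : F' 0 = -p) (hF'1 : F' 1 = 0) (hX : ‖X‖ = 1)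
    (hZL : inner ℝ (Z - X) (X - F) = 0) (hZC : Z 0 ^ 2 + Z 1 ^ 2 / (1 - p ^ 2) = 1) :
    ∃ r : ℝ, Z - F' = r • X := by
  have hcs : inner ℝ (Z - F') X = ‖Z - F'‖ * ‖X‖ := by
    rw [inner_sub_focus_of_mem_pedal hF0 hF1 hF'0 hF'1 hX hZL,
      norm_sub_focus_of_mem_ellipse hp hF'0 hF'1 hZC, hX, mul_one]
  refine ⟨‖Z - F'‖, ?_⟩
  simpa [hX] using (inner_eq_norm_mul_iff_real.mp hcs)

end Ellipse

lemma inner_sub_add_eq_zero_of_mem_pedal {F X Y Z : ℝ²} (hF1 : F 1 = 0) (hXF : X ≠ F)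
    (hXY : ‖X‖ = ‖Y‖) (hYL : inner ℝ (Y - X) (X - F) = 0) (htangent : Y = X → X 1 = 0)
    (hZL : inner ℝ (Z - X) (X - F) = 0) : inner ℝ (Z - Y) (Y + F) = 0 := by
  by_cases hYX : Y = X
  · -- `L` is tangent to the circle at `X`, which then lies on the axis, so `X + F ∥ X - F`.
    subst hYX
    obtain ⟨c, hc⟩ := exists_eq_smul_of_cross_eq_zero (u := Y + F) (sub_ne_zero.2 hXF)
      (by simp [htangent rfl, hF1])
    rw [hc, inner_smul_right, hZL, mul_zero]
  · obtain ⟨t, ht⟩ := exists_eq_smul_of_inner_eq_zero (sub_ne_zero.2 hYX) (sub_ne_zero.2 hXF)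
      hZL hYL
    have hZY : Z - Y = (t - 1) • (Y - X) := by rw [sub_smul, one_smul, ← ht]; abel
    rw [hZY, real_inner_smul_left, real_inner_sub_add_eq_zero_of_norm_eq hXY hYL, mul_zero]

/-- Let `C : x² + y²/(1-p²) = 1` with foci `F = (p,0)`, `F' = (-p,0)` (`0 < p < 1`),
and let the unit circle (center `O = 0`) be the pedal circle with respect to `F`.
For `X` on the unit circle, let `L` be the line through `X` orthogonal to `FX`,
`Y` the second intersection of `L` with the unit circle, and `Z` an intersection of `L`
with `C`. Then `F'Z ∥ OX` and `FZ ∥ OY`. -/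
theorem pedal_circle_parallelism (p : ℝ) (hp0 : 0 < p) (hp1 : p < 1)
    (F F' X Y Z : EuclideanSpace ℝ (Fin 2))
    (hF0 : F 0 = p) (hF1 : F 1 = 0) (hF'0 : F' 0 = -p) (hF'1 : F' 1 = 0)
    (hX : ‖X‖ = 1) (hY : ‖Y‖ = 1)
    (hYL : inner ℝ (Y - X) (X - F) = (0 : ℝ))
    (htangent : Y = X → X 1 = 0)
    (hZL : inner ℝ (Z - X) (X - F) = (0 : ℝ))
    (hZC : (Z 0) ^ 2 + (Z 1) ^ 2 / (1 - p ^ 2) = 1) :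
    (∃ r : ℝ, Z - F' = r • X) ∧ (∃ s : ℝ, Z - F = s • Y) := by
  have hp : p ^ 2 < 1 := by nlinarith
  have hF' : F' = -F := ext_fin_two (by simp [hF0, hF'0]) (by simp [hF1, hF'1])
  have hXF : X ≠ F := by
    rintro rfl
    have := norm_sq_fin_two X
    rw [hX, hF0, hF1] at this
    linarith
  have hYfoot : inner ℝ (Z - Y) (Y - F') = 0 := by
    rw [hF', sub_neg_eq_add]
    exact inner_sub_add_eq_zero_of_mem_pedal hF1 hXF (hX.trans hY.symm) hYL htangent hZL
  refine ⟨exists_sub_focus_eq_smul hp hF0 hF1 hF'0 hF'1 hX hZL hZC, ?_⟩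
  exact exists_sub_focus_eq_smul (p := -p) (by rwa [neg_sq]) hF'0 hF'1 (by rw [hF0, neg_neg])
    hF1 hY hYfoot (by rwa [neg_sq])
end

section
/- Let C be an ellipse with foci F and F'. If tangent lines to C at points X and Y intersect at Z, then ∠FZX = ∠F'ZY (the lines ZF and ZF' are isogonal with respect to the two tangent lines). -/
open Real EuclideanGeometry
open scoped RealInnerProductSpace

/-!
The tangent to the ellipse at `p` has direction `T p = (-a² p₁, b² p₀)`, and the two tangents
at `X` and `Y` meet at `Z = X - l • T X = Y + l • T Y` for a single scalar `l`. For a focus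
`F = (f, 0)` and a point `Z = p - s • T p` of the tangent at `p`, the dot and cross products of
`F - Z` and `p - Z` factor through the focal factor `a² - f p₀` (`a` times the focal radius of
`p`). Comparing the two sides, `(F' - Z, Y - Z)` has dot product `t` times and cross product `-t`
times that of `(F - Z, X - Z)`, with `t = (a² + c Y₀) / (a² - c X₀) > 0`: up to scale the two
pairs of vectors are mirror images of each other, so they span the same unoriented angle.
-/

local notation "ℝ²" => EuclideanSpace ℝ (Fin 2)

def cross (u v : ℝ²) : ℝ := u 0 * v 1 - u 1 * v 0

lemma inner_eq_fin_two (u v : ℝ²) : ⟪u, v⟫ = u 0 * v 0 + u 1 * v 1 := by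
  simp [PiLp.inner_apply, Fin.sum_univ_two, mul_comm]

lemma norm_sq_eq_fin_two (u : ℝ²) : ‖u‖ ^ 2 = u 0 ^ 2 + u 1 ^ 2 := by
  simp [EuclideanSpace.norm_sq_eq, Fin.sum_univ_two]

lemma norm_mul_norm_sq_eq_inner_sq_add_cross_sq (u v : ℝ²) :
    (‖u‖ * ‖v‖) ^ 2 = ⟪u, v⟫ ^ 2 + cross u v ^ 2 := by
  rw [mul_pow, norm_sq_eq_fin_two, norm_sq_eq_fin_two, inner_eq_fin_two, cross]
  ring

lemma angle_eq_of_inner_eq_mul_of_cross_eq_neg_mul {u v u' v' : ℝ²} {t : ℝ} (ht : 0 < t)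
    (hinner : ⟪u', v'⟫ = t * ⟪u, v⟫) (hcross : cross u' v' = -(t * cross u v)) :
    InnerProductGeometry.angle u' v' = InnerProductGeometry.angle u v := by
  have hnorm : ‖u'‖ * ‖v'‖ = t * (‖u‖ * ‖v‖) := by
    rw [← sq_eq_sq₀ (by positivity) (by positivity), mul_pow t,
      norm_mul_norm_sq_eq_inner_sq_add_cross_sq, norm_mul_norm_sq_eq_inner_sq_add_cross_sq,
      hinner, hcross]
    ring
  rw [InnerProductGeometry.angle, InnerProductGeometry.angle, hinner, hnorm,
    mul_div_mul_left _ _ ht.ne']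

lemma mul_add_mul_eq_of_div_add_div_eq_one {a b x y : ℝ} (ha : a ≠ 0) (hb : b ≠ 0)
    (h : x / a ^ 2 + y / b ^ 2 = 1) : b ^ 2 * x + a ^ 2 * y = a ^ 2 * b ^ 2 := by
  field_simp at h
  linear_combination h

section Ellipse

variable {a b : ℝ}

def tangentDir (a b : ℝ) (p : ℝ²) : ℝ² := !₂[-a ^ 2 * p 1, b ^ 2 * p 0]

@[simp]
lemma tangentDir_apply_zero (p : ℝ²) : tangentDir a b p 0 = -a ^ 2 * p 1 := rfl

@[simp]
lemma tangentDir_apply_one (p : ℝ²) : tangentDir a b p 1 = b ^ 2 * p 0 := rfl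

lemma zero_lt_sq_sub_mul_of_mem_ellipse {f : ℝ} {p : ℝ²} (ha : a ≠ 0) (hb : b ≠ 0)
    (hp : b ^ 2 * p 0 ^ 2 + a ^ 2 * p 1 ^ 2 = a ^ 2 * b ^ 2) (hf : f ^ 2 < a ^ 2) :
    0 < a ^ 2 - f * p 0 := by
  have hp0 : p 0 ^ 2 ≤ a ^ 2 :=
    le_of_mul_le_mul_left (by nlinarith [sq_nonneg (a * p 1)]) (by positivity : 0 < b ^ 2)
  have hfp : (f * p 0) ^ 2 < (a ^ 2) ^ 2 :=
    calc (f * p 0) ^ 2 = f ^ 2 * p 0 ^ 2 := mul_pow _ _ _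
      _ ≤ f ^ 2 * a ^ 2 := mul_le_mul_of_nonneg_left hp0 (sq_nonneg f)
      _ < a ^ 2 * a ^ 2 := mul_lt_mul_of_pos_right hf (by positivity)
      _ = (a ^ 2) ^ 2 := (sq _).symm
  linarith [lt_of_pow_lt_pow_left₀ 2 (sq_nonneg a) hfp]

section Pole

variable {X Y Z : ℝ²}

lemma pole_mul_det (hZX : b ^ 2 * (Z 0 * X 0) + a ^ 2 * (Z 1 * X 1) = a ^ 2 * b ^ 2)
    (hZY : b ^ 2 * (Z 0 * Y 0) + a ^ 2 * (Z 1 * Y 1) = a ^ 2 * b ^ 2) :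
    b ^ 2 * (Z 0 * (X 0 * Y 1 - Y 0 * X 1)) = a ^ 2 * b ^ 2 * (Y 1 - X 1) ∧
      a ^ 2 * (Z 1 * (X 0 * Y 1 - Y 0 * X 1)) = a ^ 2 * b ^ 2 * (X 0 - Y 0) :=
  ⟨by linear_combination Y 1 * hZX - X 1 * hZY, by linear_combination X 0 * hZY - Y 0 * hZX⟩

lemma det_ne_zero_of_mem_polar (ha : a ≠ 0) (hb : b ≠ 0)
    (hZX : b ^ 2 * (Z 0 * X 0) + a ^ 2 * (Z 1 * X 1) = a ^ 2 * b ^ 2)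
    (hZY : b ^ 2 * (Z 0 * Y 0) + a ^ 2 * (Z 1 * Y 1) = a ^ 2 * b ^ 2) (hXY : X ≠ Y) :
    X 0 * Y 1 - Y 0 * X 1 ≠ 0 := by
  intro hD
  obtain ⟨h1, h2⟩ := pole_mul_det hZX hZY
  rw [hD, mul_zero, mul_zero, eq_comm, mul_eq_zero, sub_eq_zero] at h1 h2
  have hab0 : a ^ 2 * b ^ 2 ≠ 0 := by positivity
  exact hXY <| PiLp.ext fun i => by
    fin_cases i
    exacts [h2.resolve_left hab0, (h1.resolve_left hab0).symm]

lemma exists_sub_eq_smul_tangentDir (ha : a ≠ 0) (hb : b ≠ 0)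
    (hZX : b ^ 2 * (Z 0 * X 0) + a ^ 2 * (Z 1 * X 1) = a ^ 2 * b ^ 2)
    (hZY : b ^ 2 * (Z 0 * Y 0) + a ^ 2 * (Z 1 * Y 1) = a ^ 2 * b ^ 2)
    (hX : b ^ 2 * X 0 ^ 2 + a ^ 2 * X 1 ^ 2 = a ^ 2 * b ^ 2)
    (hY : b ^ 2 * Y 0 ^ 2 + a ^ 2 * Y 1 ^ 2 = a ^ 2 * b ^ 2) (hXY : X ≠ Y) :
    ∃ l : ℝ, X - Z = l • tangentDir a b X ∧ Y - Z = (-l) • tangentDir a b Y := by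
  obtain ⟨h1, h2⟩ := pole_mul_det hZX hZY
  have hD' : a ^ 2 * b ^ 2 * (X 0 * Y 1 - Y 0 * X 1) ≠ 0 := by
    have := det_ne_zero_of_mem_polar ha hb hZX hZY hXY
    positivity
  set l := (b ^ 2 * (X 0 * Y 0) + a ^ 2 * (X 1 * Y 1) - a ^ 2 * b ^ 2) /
    (a ^ 2 * b ^ 2 * (X 0 * Y 1 - Y 0 * X 1))
  have hl : l * (a ^ 2 * b ^ 2 * (X 0 * Y 1 - Y 0 * X 1)) =
      b ^ 2 * (X 0 * Y 0) + a ^ 2 * (X 1 * Y 1) - a ^ 2 * b ^ 2 :=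
    div_mul_cancel₀ _ hD'
  refine ⟨l, ?_, ?_⟩ <;> rw [PiLp.ext_iff, Fin.forall_fin_two] <;>
    simp only [PiLp.sub_apply, PiLp.smul_apply, smul_eq_mul, tangentDir_apply_zero,
      tangentDir_apply_one] <;>
    refine ⟨mul_left_cancel₀ hD' ?_, mul_left_cancel₀ hD' ?_⟩
  · linear_combination -a ^ 2 * h1 + a ^ 2 * Y 1 * hX + a ^ 2 * X 1 * hl
  · linear_combination -b ^ 2 * h2 - b ^ 2 * Y 0 * hX - b ^ 2 * X 0 * hl
  · linear_combination -a ^ 2 * h1 - a ^ 2 * X 1 * hY - a ^ 2 * Y 1 * hl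
  · linear_combination -b ^ 2 * h2 + b ^ 2 * X 0 * hY + b ^ 2 * Y 0 * hl

end Pole

section Focus

variable {f s : ℝ} {F p q : ℝ²}

lemma inner_focus_sub_of_sub_eq_smul_tangentDir (hF0 : F 0 = f) (hF1 : F 1 = 0)
    (hf : f ^ 2 = a ^ 2 - b ^ 2) (hp : b ^ 2 * p 0 ^ 2 + a ^ 2 * p 1 ^ 2 = a ^ 2 * b ^ 2)
    (hq : p - q = s • tangentDir a b p) :
    ⟪F - q, p - q⟫ = s * (a ^ 2 - f * p 0) * (s * b ^ 2 * (a ^ 2 + f * p 0) - f * p 1) := by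
  rw [show q = p - s • tangentDir a b p by rw [← hq, sub_sub_cancel], inner_eq_fin_two]
  simp only [PiLp.sub_apply, PiLp.smul_apply, smul_eq_mul, tangentDir_apply_zero,
    tangentDir_apply_one, hF0, hF1]
  linear_combination s ^ 2 * a ^ 2 * hp + (s ^ 2 * b ^ 2 * p 0 ^ 2 - s * p 0 * p 1) * hf

lemma cross_focus_sub_of_sub_eq_smul_tangentDir (hF0 : F 0 = f) (hF1 : F 1 = 0)
    (hp : b ^ 2 * p 0 ^ 2 + a ^ 2 * p 1 ^ 2 = a ^ 2 * b ^ 2) (hq : p - q = s • tangentDir a b p) :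
    cross (F - q) (p - q) = -(s * b ^ 2 * (a ^ 2 - f * p 0)) := by
  rw [show q = p - s • tangentDir a b p by rw [← hq, sub_sub_cancel], cross]
  simp only [PiLp.sub_apply, PiLp.smul_apply, smul_eq_mul, tangentDir_apply_zero,
    tangentDir_apply_one, hF0, hF1]
  linear_combination -s * hp

end Focus

end Ellipse

/-- (Isogonal property of a conic.) If the tangent lines to the ellipse
`x²/a² + y²/b² = 1` at `X` and `Y` meet at `Z`, and `F = (c,0)`, `F' = (-c,0)` are the
foci (`c = √(a² - b²)`), then `∠ F Z X = ∠ F' Z Y`: the lines `ZF` and `ZF'` are isogonal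
with respect to the two tangent lines. -/
theorem isogonal_property (a b c : ℝ) (hb : 0 < b) (hab : b < a)
    (hc : c = Real.sqrt (a ^ 2 - b ^ 2))
    (X Y Z F F' : EuclideanSpace ℝ (Fin 2))
    (hF0 : F 0 = c) (hF1 : F 1 = 0) (hF'0 : F' 0 = -c) (hF'1 : F' 1 = 0)
    (hX : (X 0) ^ 2 / a ^ 2 + (X 1) ^ 2 / b ^ 2 = 1)
    (hY : (Y 0) ^ 2 / a ^ 2 + (Y 1) ^ 2 / b ^ 2 = 1)
    (hXY : X ≠ Y)
    (hZX : Z 0 * X 0 / a ^ 2 + Z 1 * X 1 / b ^ 2 = 1)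
    (hZY : Z 0 * Y 0 / a ^ 2 + Z 1 * Y 1 / b ^ 2 = 1) :
    ∠ F Z X = ∠ F' Z Y := by
  have ha : a ≠ 0 := (hb.trans hab).ne'
  have hc2 : c ^ 2 = a ^ 2 - b ^ 2 := by rw [hc, sq_sqrt (by nlinarith)]
  have hc2' : (-c) ^ 2 = a ^ 2 - b ^ 2 := by rw [neg_sq, hc2]
  replace hX := mul_add_mul_eq_of_div_add_div_eq_one ha hb.ne' hX
  replace hY := mul_add_mul_eq_of_div_add_div_eq_one ha hb.ne' hY
  replace hZX := mul_add_mul_eq_of_div_add_div_eq_one ha hb.ne' hZX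
  replace hZY := mul_add_mul_eq_of_div_add_div_eq_one ha hb.ne' hZY
  obtain ⟨l, hlX, hlY⟩ := exists_sub_eq_smul_tangentDir ha hb.ne' hZX hZY hX hY hXY
  have hl : l * b ^ 2 * (X 0 + Y 0) = X 1 - Y 1 := by
    have hX1 := congrArg (· 1) hlX
    have hY1 := congrArg (· 1) hlY
    simp only [PiLp.sub_apply, PiLp.smul_apply, smul_eq_mul, tangentDir_apply_one] at hX1 hY1
    linear_combination hY1 - hX1
  have hkX := zero_lt_sq_sub_mul_of_mem_ellipse ha hb.ne' hX (f := c) (by nlinarith)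
  have hkY := zero_lt_sq_sub_mul_of_mem_ellipse ha hb.ne' hY (f := -c) (by nlinarith)
  simp only [EuclideanGeometry.angle, vsub_eq_sub]
  refine (angle_eq_of_inner_eq_mul_of_cross_eq_neg_mul (div_pos hkY hkX) ?_ ?_).symm
  · rw [inner_focus_sub_of_sub_eq_smul_tangentDir hF'0 hF'1 hc2' hY hlY,
      inner_focus_sub_of_sub_eq_smul_tangentDir hF0 hF1 hc2 hX hlX,
      div_mul_eq_mul_div, eq_div_iff hkX.ne']
    linear_combination -(l * c * (a ^ 2 + c * Y 0) * (a ^ 2 - c * X 0)) * hl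
  · rw [cross_focus_sub_of_sub_eq_smul_tangentDir hF'0 hF'1 hY hlY,
      cross_focus_sub_of_sub_eq_smul_tangentDir hF0 hF1 hX hlX]
    field_simp
end

section
/- For a regular 2n-gon inscribed in a circle, the opposite sides S_i and S_{i+n} are parallel, and under a projective transformation taking the polygon to a discrete conic with foci F, F', the intersections of opposite sides K_i = S_i ∩ S_{i+n} all lie on a single line perpendicular to FF'. Concretely: for the discrete conic with vertices V_j = ((p - cos(jθ+φ))/(p cos(jθ+φ) - 1), ((p²-1) sin(jθ+φ))/(p cos(jθ+φ) - 1)), j = 1,…,2n, θ = π/n, the points K_i = line(V_i,V_{i+1}) ∩ line(V_{i+n},V_{i+n+1}) all have first coordinate equal to -1/p. -/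
open Real EuclideanGeometry

lemma cross_of_collinear (a b c : EuclideanSpace ℝ (Fin 2))
    (h : Collinear ℝ {a, b, c}) :
    (b 0 - a 0) * (c 1 - a 1) = (b 1 - a 1) * (c 0 - a 0) := by
  rw [collinear_iff_exists_forall_eq_smul_vadd] at h
  obtain ⟨p0, v, hv⟩ := h
  obtain ⟨ta, hta⟩ := hv a (by simp)
  obtain ⟨tb, htb⟩ := hv b (by simp)
  obtain ⟨tc, htc⟩ := hv c (by simp)
  subst hta htb htc
  simp only [vadd_eq_add, PiLp.add_apply, PiLp.smul_apply, smul_eq_mul]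
  ring


/-- (Pascal-type theorem for even-sided discrete conics.) For the discrete conic with
vertices `V_j = ((p - cos(jθ+φ))/(p cos(jθ+φ) - 1), ((p²-1) sin(jθ+φ))/(p cos(jθ+φ) - 1))`,
`θ = π/n`, with foci `F = (-p, 0)` and `F' = (p, 0)`, every intersection point `K_i` of
the opposite sides `line (V_i, V_{i+1})` and `line (V_{i+n}, V_{i+n+1})` lies on the
vertical line `x = -1/p`, which is perpendicular to the axis `FF'`. -/
theorem opposite_sides_meet_on_line (p : ℝ) (hp0 : 0 < p) (hp1 : p < 1)
    (n : ℕ) (hn : 2 ≤ n) (θ φ : ℝ) (hθ : θ = π / n)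
    (hden : ∀ j : ℤ, p * Real.cos ((j : ℝ) * θ + φ) - 1 ≠ 0)
    (V : ℤ → EuclideanSpace ℝ (Fin 2))
    (hV0 : ∀ j : ℤ, V j 0 =
      (p - Real.cos ((j : ℝ) * θ + φ)) / (p * Real.cos ((j : ℝ) * θ + φ) - 1))
    (hV1 : ∀ j : ℤ, V j 1 =
      ((p ^ 2 - 1) * Real.sin ((j : ℝ) * θ + φ)) / (p * Real.cos ((j : ℝ) * θ + φ) - 1))
    (hVne : ∀ j : ℤ, V j ≠ V (j + 1))
    (K : ℤ → EuclideanSpace ℝ (Fin 2))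
    (hK1 : ∀ i : ℤ, Collinear ℝ {V i, V (i + 1), K i})
    (hK2 : ∀ i : ℤ, Collinear ℝ {V (i + n), V (i + n + 1), K i}) :
    ∀ i : ℤ, K i 0 = -1 / p := by
  have hn0 : (n : ℝ) ≠ 0 := by positivity
  have hnθ : (n : ℝ) * θ = π := by rw [hθ]; field_simp
  intro i
  set A : ℝ := (i : ℝ) * θ + φ with hA
  set B : ℝ := A + θ with hB
  have e1 : ((i + 1 : ℤ) : ℝ) * θ + φ = B := by push_cast [hA, hB]; ring
  have e2 : ((i + (n:ℤ) : ℤ) : ℝ) * θ + φ = A + π := by push_cast [hA, ← hnθ]; ring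
  have e3 : ((i + (n:ℤ) + 1 : ℤ) : ℝ) * θ + φ = B + π := by push_cast [hA, hB, ← hnθ]; ring
  have h1 := cross_of_collinear _ _ _ (hK1 i)
  have h2 := cross_of_collinear _ _ _ (hK2 i)
  rw [hV0, hV1, hV0, hV1, e1] at h1
  rw [hV0, hV1, hV0, hV1, e2, e3, Real.cos_add_pi, Real.sin_add_pi,
    Real.cos_add_pi, Real.sin_add_pi] at h2
  have hd1 : p * Real.cos A - 1 ≠ 0 := hden i
  have hd2 : p * Real.cos B - 1 ≠ 0 := by have := hden (i+1); rwa [e1] at this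
  have hd3 : p * -Real.cos A - 1 ≠ 0 := by
    have := hden (i + (n:ℤ)); rwa [e2, Real.cos_add_pi] at this
  have hd4 : p * -Real.cos B - 1 ≠ 0 := by
    have := hden (i + (n:ℤ) + 1); rwa [e3, Real.cos_add_pi] at this
  have hsθ : Real.sin θ ≠ 0 := by
    rw [hθ]
    apply ne_of_gt
    apply Real.sin_pos_of_pos_of_lt_pi
    · positivity
    · rw [div_lt_iff₀ (by positivity)]
      nlinarith [Real.pi_pos, mul_le_mul_of_nonneg_left (show (2:ℝ) ≤ (n:ℝ) by exact_mod_cast hn) Real.pi_pos.le]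
  have hts : Real.sin B * Real.cos A - Real.cos B * Real.sin A = Real.sin θ := by
    rw [← Real.sin_sub]; congr 1; rw [hB]; ring
  have hpy : Real.sin A ^ 2 + Real.cos A ^ 2 = 1 := Real.sin_sq_add_cos_sq A
  have hpy' : Real.sin B ^ 2 + Real.cos B ^ 2 = 1 := Real.sin_sq_add_cos_sq B
  have hp : p ≠ 0 := ne_of_gt hp0
  rw [← hA] at h1
  have hd3' : -(p * Real.cos A) - 1 ≠ 0 := by intro h; exact hd3 (by linarith)
  have hd4' : -(p * Real.cos B) - 1 ≠ 0 := by intro h; exact hd4 (by linarith)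
  field_simp at h1 h2 ⊢
  have key : (K i 0 * p + 1) *
      ((Real.sin B * Real.cos A - Real.cos B * Real.sin A) *
        ((p * Real.cos A - 1) * (-(p * Real.cos A) - 1)) * (2 * (p ^ 2 - 1))) = 0 := by
    linear_combination (-(-(p * Real.cos A) - 1)) * h1 + (-(p * Real.cos A - 1)) * h2
  rw [hts] at key
  have hQ : (2 : ℝ) * (p ^ 2 - 1) ≠ 0 := by nlinarith
  have hfac : Real.sin θ * ((p * Real.cos A - 1) * (-(p * Real.cos A) - 1)) * (2 * (p ^ 2 - 1)) ≠ 0 :=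
    mul_ne_zero (mul_ne_zero hsθ (mul_ne_zero hd1 hd3')) hQ
  have : K i 0 * p + 1 = 0 := by
    rcases mul_eq_zero.mp key with h | h
    · exact h
    · exact absurd h hfac
  linarith
end
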